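/- Let p be an odd prime, let σ denote Kubota's 2-cocycle on SL₂(ℚ_p), and let 𝒩 be the set of matrices (a b; c d) ∈ SL₂(ℚ_p) with a − 1 ∈ pℤ_p, d − 1 ∈ pℤ_p, b ∈ pℤ_p and c ∈ p²ℤ_p. Then σ(v, v′) = 1 for all v, v′ ∈ 𝒩; that is, the trivial section v ↦ ⟨v, 1⟩ is a group homomorphism from 𝒩 into the metaplectic double cover of SL₂(ℚ_p). -/

import Mathlib

open scoped Classical

/-- The quadratic Hilbert symbol over `ℚ_p`: `1` if `z² = a·x² + b·y²` has a nonzero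
solution, `-1` otherwise. -/
noncomputable def hilbertSym (p : ℕ) [Fact p.Prime] (a b : ℚ_[p]) : ℤ :=
  if ∃ x y z : ℚ_[p], (x, y, z) ≠ (0, 0, 0) ∧ z ^ 2 = a * x ^ 2 + b * y ^ 2 then 1 else -1

/-- Kubota's function `x(g)`: the lower-left entry if nonzero, else the lower-right entry. -/
noncomputable def kubotaX (p : ℕ) [Fact p.Prime] (g : Matrix (Fin 2) (Fin 2) ℚ_[p]) : ℚ_[p] :=
  if g 1 0 ≠ 0 then g 1 0 else g 1 1

/-- Kubota's 2-cocycle on `SL₂(ℚ_p)`. -/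
noncomputable def kubota (p : ℕ) [Fact p.Prime]
    (g g' : Matrix.SpecialLinearGroup (Fin 2) ℚ_[p]) : ℤ :=
  hilbertSym p (kubotaX p ↑(g * g') / kubotaX p ↑g) (kubotaX p ↑(g * g') / kubotaX p ↑g')

/-- The congruence subgroup `𝒩 = {(a b; c d) : a-1, d-1 ∈ pℤ_p, b ∈ pℤ_p, c ∈ p²ℤ_p}`. -/
def inNodd (p : ℕ) [Fact p.Prime] (v : Matrix.SpecialLinearGroup (Fin 2) ℚ_[p]) : Prop :=
  (∃ y : ℤ_[p], (v : Matrix (Fin 2) (Fin 2) ℚ_[p]) 0 0 - 1 = (p : ℚ_[p]) * (y : ℚ_[p])) ∧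
  (∃ y : ℤ_[p], (v : Matrix (Fin 2) (Fin 2) ℚ_[p]) 1 1 - 1 = (p : ℚ_[p]) * (y : ℚ_[p])) ∧
  (∃ y : ℤ_[p], (v : Matrix (Fin 2) (Fin 2) ℚ_[p]) 0 1 = (p : ℚ_[p]) * (y : ℚ_[p])) ∧
  (∃ y : ℤ_[p], (v : Matrix (Fin 2) (Fin 2) ℚ_[p]) 1 0 = (p : ℚ_[p]) ^ 2 * (y : ℚ_[p]))

/-! Since `p` is odd, Hensel's lemma makes every element of `1 + pℤ_p` a square, in particular the
entries `v₂₂` and `v'₁₁`. Let `c`, `c'` be the lower-left entries of `v`, `v'`. If `c = 0` the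
second argument of the symbol is `v₂₂`; if `c' = 0` the first one is `v'₁₁`. Otherwise, with
`X = x(vv')` and `C = (vv')₂₁ = c v'₁₁ + v₂₂ c'`,
`(X/c)·(c² v'₁₁) + (X/c')·(c'² v₂₂) = X·C`, a square because `X = C` unless `C = 0`. -/

namespace Padic

variable {p : ℕ} [Fact p.Prime]

theorem norm_p_mul_lt_one (y : ℤ_[p]) : ‖(p : ℚ_[p]) * y‖ < 1 := by
  rw [norm_mul, PadicInt.padic_norm_e_of_padicInt]
  exact mul_lt_one_of_nonneg_of_lt_one_left (norm_nonneg _) norm_p_lt_one (PadicInt.norm_le_one y)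

theorem ne_zero_of_norm_sub_one_lt_one {u : ℚ_[p]} (h : ‖u - 1‖ < 1) : u ≠ 0 := by
  rintro rfl
  simp at h

theorem isSquare_of_norm_sub_one_lt_one (hp : p ≠ 2) {u : ℚ_[p]} (h : ‖u - 1‖ < 1) :
    IsSquare u := by
  have hu : ‖u‖ ≤ 1 := by
    simpa using (nonarchimedean (u - 1) 1).trans (max_le h.le norm_one.le)
  obtain ⟨w, rfl⟩ : ∃ w : ℤ_[p], (w : ℚ_[p]) = u := ⟨⟨u, hu⟩, rfl⟩
  have h2 : ‖(1 + 1 : ℤ_[p])‖ = 1 := by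
    rw [one_add_one_eq_two]
    exact_mod_cast PadicInt.norm_natCast_eq_one_iff.2
      ((Nat.coprime_primes Fact.out Nat.prime_two).2 hp)
  set F : Polynomial ℤ_[p] := .X ^ 2 - .C w
  have hF : ‖F.aeval (1 : ℤ_[p])‖ < ‖F.derivative.aeval (1 : ℤ_[p])‖ ^ 2 := by
    simpa [F, h2, norm_sub_rev (1 : ℤ_[p]), PadicInt.norm_def] using h
  obtain ⟨z, hz, -⟩ := hensels_lemma hF
  have hzw : z ^ 2 = w := by simpa [F, sub_eq_zero] using hz
  exact ⟨z, by rw [← hzw]; push_cast; ring⟩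

end Padic

section Hilbert

variable {p : ℕ} [Fact p.Prime]

theorem hilbertSym_comm (a b : ℚ_[p]) : hilbertSym p a b = hilbertSym p b a := by
  have key : ∀ a b : ℚ_[p],
      (∃ x y z : ℚ_[p], (x, y, z) ≠ (0, 0, 0) ∧ z ^ 2 = a * x ^ 2 + b * y ^ 2) →
      ∃ x y z : ℚ_[p], (x, y, z) ≠ (0, 0, 0) ∧ z ^ 2 = b * x ^ 2 + a * y ^ 2 := by
    rintro a b ⟨x, y, z, hne, h⟩
    exact ⟨y, x, z, by simpa [and_left_comm] using hne, by rw [h, add_comm]⟩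
  unfold hilbertSym
  congr 1
  exact propext ⟨key a b, key b a⟩

theorem hilbertSym_eq_one_of_isSquare_add {a b s t : ℚ_[p]} (hs : s ≠ 0)
    (h : IsSquare (a * s ^ 2 + b * t ^ 2)) : hilbertSym p a b = 1 := by
  obtain ⟨r, hr⟩ := h
  exact if_pos ⟨s, t, r, by simp [hs], by rw [hr, sq]⟩

theorem hilbertSym_eq_one_of_isSquare_left {a : ℚ_[p]} (b : ℚ_[p]) (h : IsSquare a) :
    hilbertSym p a b = 1 :=
  hilbertSym_eq_one_of_isSquare_add (t := 0) one_ne_zero (by simpa using h)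

theorem hilbertSym_eq_one_of_isSquare_right (a : ℚ_[p]) {b : ℚ_[p]} (h : IsSquare b) :
    hilbertSym p a b = 1 :=
  hilbertSym_comm a b ▸ hilbertSym_eq_one_of_isSquare_left a h

end Hilbert

namespace Matrix.SpecialLinearGroup

variable {R : Type*} [CommRing R]

theorem mul_apply_one_zero (g g' : SpecialLinearGroup (Fin 2) R) :
    (g * g') 1 0 = g 1 0 * g' 0 0 + g 1 1 * g' 1 0 := by
  simp [coe_mul, Matrix.mul_apply, Fin.sum_univ_two]

theorem mul_apply_one_one (g g' : SpecialLinearGroup (Fin 2) R) :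
    (g * g') 1 1 = g 1 0 * g' 0 1 + g 1 1 * g' 1 1 := by
  simp [coe_mul, Matrix.mul_apply, Fin.sum_univ_two]

theorem apply_zero_zero_mul_apply_one_one_eq_one {g : SpecialLinearGroup (Fin 2) R}
    (h : g 1 0 = 0) : g 0 0 * g 1 1 = 1 := by
  simpa [h] using (det_fin_two (g : Matrix (Fin 2) (Fin 2) R)).symm.trans g.det_coe

end Matrix.SpecialLinearGroup

section Kubota

variable {p : ℕ} [Fact p.Prime]

open Matrix.SpecialLinearGroup

theorem kubotaX_of_ne_zero {g : Matrix (Fin 2) (Fin 2) ℚ_[p]} (h : g 1 0 ≠ 0) :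
    kubotaX p g = g 1 0 :=
  if_pos h

theorem kubotaX_of_eq_zero {g : Matrix (Fin 2) (Fin 2) ℚ_[p]} (h : g 1 0 = 0) :
    kubotaX p g = g 1 1 :=
  if_neg (not_not.2 h)

theorem isSquare_kubotaX_mul_apply_one_zero (g : Matrix (Fin 2) (Fin 2) ℚ_[p]) :
    IsSquare (kubotaX p g * g 1 0) := by
  by_cases h : g 1 0 = 0
  · simp [h]
  · rw [kubotaX_of_ne_zero h]
    exact IsSquare.mul_self _

theorem kubotaX_ne_zero (g : Matrix.SpecialLinearGroup (Fin 2) ℚ_[p]) : kubotaX p g ≠ 0 := by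
  by_cases h : g 1 0 = 0
  · rw [kubotaX_of_eq_zero h]
    exact right_ne_zero_of_mul_eq_one (apply_zero_zero_mul_apply_one_one_eq_one h)
  · rwa [kubotaX_of_ne_zero h]

theorem kubotaX_mul_of_apply_one_zero_eq_zero {g : Matrix.SpecialLinearGroup (Fin 2) ℚ_[p]}
    (g' : Matrix.SpecialLinearGroup (Fin 2) ℚ_[p]) (h : g 1 0 = 0) :
    kubotaX p ↑(g * g') = g 1 1 * kubotaX p g' := by
  by_cases h' : g' 1 0 = 0
  · have hgg' : (g * g') 1 0 = 0 := by simp [mul_apply_one_zero, h, h']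
    rw [kubotaX_of_eq_zero hgg', kubotaX_of_eq_zero h', mul_apply_one_one, h, zero_mul, zero_add]
  · have hd : g 1 1 ≠ 0 :=
      right_ne_zero_of_mul_eq_one (apply_zero_zero_mul_apply_one_one_eq_one h)
    have hgg' : (g * g') 1 0 = g 1 1 * g' 1 0 := by simp [mul_apply_one_zero, h]
    rw [kubotaX_of_ne_zero (hgg' ▸ mul_ne_zero hd h'), hgg', kubotaX_of_ne_zero h']

theorem kubotaX_mul_of_apply_one_zero_eq_zero_right
    {g g' : Matrix.SpecialLinearGroup (Fin 2) ℚ_[p]} (h : g 1 0 ≠ 0) (h' : g' 1 0 = 0) :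
    kubotaX p ↑(g * g') = g 1 0 * g' 0 0 := by
  have ha' : g' 0 0 ≠ 0 :=
    left_ne_zero_of_mul_eq_one (apply_zero_zero_mul_apply_one_one_eq_one h')
  have hgg' : (g * g') 1 0 = g 1 0 * g' 0 0 := by simp [mul_apply_one_zero, h']
  rw [kubotaX_of_ne_zero (hgg' ▸ mul_ne_zero h ha'), hgg']

theorem kubota_eq_one_of_apply_one_zero_ne_zero {g g' : Matrix.SpecialLinearGroup (Fin 2) ℚ_[p]}
    (h : g 1 0 ≠ 0) (h' : g' 1 0 ≠ 0) (hd : IsSquare (g 1 1)) (ha' : IsSquare (g' 0 0))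
    (ha'0 : g' 0 0 ≠ 0) : kubota p g g' = 1 := by
  obtain ⟨d, hd⟩ := hd
  obtain ⟨a', ha'⟩ := ha'
  have ha'_ne : a' ≠ 0 := by rintro rfl; exact ha'0 (by rw [ha', mul_zero])
  refine hilbertSym_eq_one_of_isSquare_add (s := g 1 0 * a') (t := g' 1 0 * d)
    (mul_ne_zero h ha'_ne) ?_
  convert isSquare_kubotaX_mul_apply_one_zero (p := p) ↑(g * g') using 1
  rw [kubotaX_of_ne_zero h, kubotaX_of_ne_zero h', mul_apply_one_zero, hd, ha']
  field_simp

end Kubota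

/-- For an odd prime `p`, Kubota's cocycle is trivial on the congruence subgroup `𝒩` of
`SL₂(ℚ_p)`, i.e. the trivial section splits the metaplectic double cover over `𝒩`. -/
theorem kubota_cocycle_trivial_on_N_odd (p : ℕ) [Fact p.Prime] (hp : Odd p)
    (v v' : Matrix.SpecialLinearGroup (Fin 2) ℚ_[p])
    (hv : inNodd p v) (hv' : inNodd p v') : kubota p v v' = 1 := by
  have hp2 : p ≠ 2 := by rintro rfl; norm_num at hp
  obtain ⟨-, ⟨yd, hd⟩, -, -⟩ := hv
  obtain ⟨⟨ya', ha'⟩, -, -, -⟩ := hv'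
  have hd1 : ‖v 1 1 - 1‖ < 1 := by rw [hd]; exact Padic.norm_p_mul_lt_one yd
  have ha'1 : ‖v' 0 0 - 1‖ < 1 := by rw [ha']; exact Padic.norm_p_mul_lt_one ya'
  have hd_sq := Padic.isSquare_of_norm_sub_one_lt_one hp2 hd1
  have ha'_sq := Padic.isSquare_of_norm_sub_one_lt_one hp2 ha'1
  rcases eq_or_ne (v 1 0) 0 with hc | hc
  · refine hilbertSym_eq_one_of_isSquare_right _ ?_
    rwa [kubotaX_mul_of_apply_one_zero_eq_zero v' hc,
      mul_div_cancel_right₀ _ (kubotaX_ne_zero v')]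
  rcases eq_or_ne (v' 1 0) 0 with hc' | hc'
  · refine hilbertSym_eq_one_of_isSquare_left _ ?_
    rwa [kubotaX_mul_of_apply_one_zero_eq_zero_right hc hc', kubotaX_of_ne_zero hc,
      mul_div_cancel_left₀ _ hc]
  · exact kubota_eq_one_of_apply_one_zero_ne_zero hc hc' hd_sq ha'_sq
      (Padic.ne_zero_of_norm_sub_one_lt_one ha'1)
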